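/- Let k be an algebraically closed field of characteristic p > 0, q = p^e, and V a finite-dimensional k-vector space with an injective q-semilinear map F : V → V. Then V has a k-basis consisting of vectors fixed by F, i.e. a basis (v_1, …, v_n) with F(v_i) = v_i for all i. -/

import Mathlib

open Polynomial Module Finset

section Aux

variable {k : Type*} [Field k] [IsAlgClosed k]

lemma aux_pow_root (q : ℕ) (hq : 0 < q) (c : k) : ∃ d : k, d ^ q = c := by
  obtain ⟨d, hd⟩ := IsAlgClosed.exists_root (X ^ q - C c)
    (by rw [Polynomial.degree_X_pow_sub_C hq]; exact_mod_cast (by omega : q ≠ 0))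
  refine ⟨d, ?_⟩
  have := hd
  simp only [Polynomial.IsRoot, Polynomial.eval_sub, Polynomial.eval_pow, Polynomial.eval_X,
    Polynomial.eval_C, sub_eq_zero] at this
  exact this

lemma aux_AS (q : ℕ) (hq : 2 ≤ q) (c : k) : ∃ t : k, t ^ q + c = t := by
  have hdeg : (X ^ q + (C c - X) : k[X]).degree ≠ 0 := by
    have h1 : (C c - X : k[X]).degree < (X ^ q : k[X]).degree := by
      rw [Polynomial.degree_X_pow]
      calc (C c - X : k[X]).degree ≤ 1 := by
            refine le_trans (Polynomial.degree_sub_le _ _) (max_le ?_ ?_)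
            · exact le_trans Polynomial.degree_C_le (by norm_num)
            · simp [Polynomial.degree_X]
        _ < (q : WithBot ℕ) := by exact_mod_cast by omega
    rw [Polynomial.degree_add_eq_left_of_degree_lt h1, Polynomial.degree_X_pow]
    exact_mod_cast (by omega : q ≠ 0)
  obtain ⟨t, ht⟩ := IsAlgClosed.exists_root _ hdeg
  refine ⟨t, ?_⟩
  simp only [Polynomial.IsRoot, Polynomial.eval_add, Polynomial.eval_sub, Polynomial.eval_pow,
    Polynomial.eval_X, Polynomial.eval_C] at ht
  linear_combination ht

end Aux

section Fixed

variable {k : Type*} [Field k] [IsAlgClosed k] (p : ℕ) [Fact p.Prime] [CharP k p]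

lemma aux_exists_fixed (e : ℕ) (he : 1 ≤ e) {V : Type*} [AddCommGroup V] [Module k V]
    [FiniteDimensional k V]
    (F : V →+ V) (hF : ∀ (c : k) (v : V), F (c • v) = c ^ (p ^ e) • F v)
    (hinj : Function.Injective F) (hV : ∃ v : V, v ≠ 0) :
    ∃ w : V, w ≠ 0 ∧ F w = w := by
  classical
  obtain ⟨v, hv⟩ := hV
  set q : ℕ := p ^ e with hqdef
  have hp2 : 2 ≤ p := (Fact.out : p.Prime).two_le
  have hq : 2 ≤ q := le_trans hp2 (Nat.le_self_pow (by omega) p)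
  set g : ℕ → V := fun i => (⇑F)^[i] v with hgdef
  -- there is a dependent family
  have hex : ∃ m : ℕ, ¬ LinearIndependent k (fun i : Fin (m + 1) => g i.val) := by
    refine ⟨finrank k V, fun h => ?_⟩
    have := h.fintype_card_le_finrank
    simp at this
  obtain ⟨m, hm, hmin⟩ : ∃ m, (¬ LinearIndependent k (fun i : Fin (m + 1) => g i.val)) ∧
      ∀ j < m, LinearIndependent k (fun i : Fin (j + 1) => g i.val) :=
    ⟨Nat.find hex, Nat.find_spec hex, fun j hj => not_not.mp (Nat.find_min hex hj)⟩
  have hmpos : 0 < m := by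
    rcases Nat.eq_zero_or_pos m with h0 | h
    · exfalso
      apply hm
      subst h0
      haveI : Unique (Fin (0 + 1)) := inferInstanceAs (Unique (Fin 1))
      refine linearIndependent_unique_iff.mpr ?_
      simpa [g] using hv
    · exact h
  obtain ⟨n, rfl⟩ : ∃ n, m = n + 1 := ⟨m - 1, by omega⟩
  have hindep : LinearIndependent k (fun i : Fin (n + 1) => g i.val) :=
    hmin n (by omega)
  -- the last vector is in the span of the earlier ones
  have hmem : g (n + 1) ∈ Submodule.span k (Set.range (fun i : Fin (n + 1) => g i.val)) := by
    by_contra hc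
    exact hm (by
      have heq : (fun i : Fin (n + 1 + 1) => g i.val)
          = Fin.snoc (fun i : Fin (n + 1) => g i.val) (g (n + 1)) := by
        funext i
        refine Fin.lastCases ?_ ?_ i
        · simp [Fin.snoc_last]
        · intro j; simp [Fin.snoc_castSucc]
      rw [heq, linearIndependent_fin_snoc]
      exact ⟨hindep, hc⟩)
  obtain ⟨a, hsum⟩ := (Submodule.mem_span_range_iff_exists_fun k).mp hmem
  -- extend coefficients to ℕ
  set A : ℕ → k := fun j => if h : j < n + 1 then a ⟨j, h⟩ else 0 with hAdef
  have hA : ∀ i : Fin (n + 1), A i.val = a i := by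
    intro i; simp [A, i.isLt, Fin.is_le]
  -- some coefficient is nonzero
  have hex0 : ∃ j0 : Fin (n + 1), a j0 ≠ 0 := by
    by_contra hc
    push_neg at hc
    have h0 : g (n + 1) = 0 := by
      rw [← hsum]
      exact Finset.sum_eq_zero (fun j _ => by rw [hc j, zero_smul])
    have : (⇑F)^[n+1] v = (⇑F)^[n+1] 0 := by
      rw [Function.iterate_fixed (map_zero F)]
      exact h0
    exact hv ((hinj.iterate (n+1)) this)
  obtain ⟨j0, hj0⟩ := hex0
  -- the polynomial whose root gives the top coefficient
  set Q : k[X] := (∑ j : Fin (n + 1), C (a j ^ q ^ (n - j.val)) * X ^ (q ^ (n + 1 - j.val) - 1))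
      - 1 with hQdef
  have hdj : ∀ j : Fin (n + 1), 1 ≤ q ^ (n + 1 - j.val) - 1 := by
    intro j
    have h1 : 1 ≤ n + 1 - j.val := by omega
    have := Nat.pow_le_pow_right (by omega : 1 ≤ q) h1
    simp only [pow_one] at this
    omega
  have hcoeff : Q.coeff (q ^ (n + 1 - j0.val) - 1) = a j0 ^ q ^ (n - j0.val) := by
    rw [hQdef, Polynomial.coeff_sub, Polynomial.finset_sum_coeff]
    have h1 : (1 : k[X]).coeff (q ^ (n + 1 - j0.val) - 1) = 0 := by
      rw [Polynomial.coeff_one, if_neg]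
      have := hdj j0
      omega
    rw [h1, sub_zero]
    rw [Finset.sum_eq_single j0]
    · rw [Polynomial.coeff_C_mul, Polynomial.coeff_X_pow, if_pos rfl, mul_one]
    · intro j _ hne
      rw [Polynomial.coeff_C_mul, Polynomial.coeff_X_pow, if_neg, mul_zero]
      intro hcontra
      apply hne
      have hq1 := hdj j
      have hq2 := hdj j0
      have hpow : q ^ (n + 1 - j0.val) = q ^ (n + 1 - j.val) := by omega
      have := Nat.pow_right_injective hq hpow
      have hj := j.isLt
      have hj0' := j0.isLt
      exact Fin.ext (by omega)
    · intro h; exact absurd (Finset.mem_univ j0) h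
  have hQdeg : Q.degree ≠ 0 := by
    intro hdeg
    have hQC := Polynomial.eq_C_of_degree_le_zero hdeg.le
    have : Q.coeff (q ^ (n + 1 - j0.val) - 1) = 0 := by
      rw [hQC, Polynomial.coeff_C, if_neg]
      have := hdj j0
      omega
    rw [hcoeff] at this
    exact pow_ne_zero _ hj0 this
  obtain ⟨t, htroot⟩ := IsAlgClosed.exists_root Q hQdeg
  have hteval : (∑ j : Fin (n + 1), a j ^ q ^ (n - j.val) * t ^ (q ^ (n + 1 - j.val) - 1)) = 1 := by
    have := htroot
    simp only [Polynomial.IsRoot, hQdef, Polynomial.eval_sub, Polynomial.eval_one,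
      Polynomial.eval_finset_sum, Polynomial.eval_mul, Polynomial.eval_C, Polynomial.eval_pow,
      Polynomial.eval_X, sub_eq_zero] at this
    exact this
  have ht0 : t ≠ 0 := by
    intro h0
    subst h0
    rw [Finset.sum_eq_zero (fun j _ => by
      rw [zero_pow (by have := hdj j; omega : q ^ (n + 1 - j.val) - 1 ≠ 0), mul_zero])] at hteval
    exact zero_ne_one hteval
  have hteq : (∑ j : Fin (n + 1), a j ^ q ^ (n - j.val) * t ^ q ^ (n + 1 - j.val)) = t := by
    calc (∑ j : Fin (n + 1), a j ^ q ^ (n - j.val) * t ^ q ^ (n + 1 - j.val))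
        = (∑ j : Fin (n + 1), a j ^ q ^ (n - j.val) * t ^ (q ^ (n + 1 - j.val) - 1)) * t := by
          rw [Finset.sum_mul]
          refine Finset.sum_congr rfl (fun j _ => ?_)
          rw [mul_assoc, ← pow_succ]
          congr 2
          have := hdj j
          omega
      _ = 1 * t := by rw [hteval]
      _ = t := one_mul t
  -- the coefficients of the fixed vector
  set x : ℕ → k := fun i => ∑ j ∈ Finset.range (i + 1), A j ^ q ^ (i - j) * t ^ q ^ (i - j + 1)
    with hxdef
  have hxn : x n = t := by
    rw [hxdef]
    simp only
    rw [← Fin.sum_univ_eq_sum_range (fun j => A j ^ q ^ (n - j) * t ^ q ^ (n - j + 1)) (n + 1)]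
    calc (∑ j : Fin (n + 1), A j.val ^ q ^ (n - j.val) * t ^ q ^ (n - j.val + 1))
        = ∑ j : Fin (n + 1), a j ^ q ^ (n - j.val) * t ^ q ^ (n + 1 - j.val) := by
          refine Finset.sum_congr rfl (fun j _ => ?_)
          have hj' : n - (j : ℕ) + 1 = n + 1 - (j : ℕ) := by omega
          rw [hA j, hj']
      _ = t := hteq
  have hx0 : x 0 = t ^ q * A 0 := by
    simp [hxdef, mul_comm]
  have hrec : ∀ i, x (i + 1) = x i ^ q + t ^ q * A (i + 1) := by
    intro i
    have hfro : x i ^ q = ∑ j ∈ Finset.range (i + 1),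
        A j ^ q ^ (i - j + 1) * t ^ q ^ (i - j + 2) := by
      have hφ : ∀ z : k, (iterateFrobenius k p e) z = z ^ q := fun z => iterateFrobenius_def p e z
      rw [hxdef]
      simp only
      rw [← hφ, map_sum]
      refine Finset.sum_congr rfl (fun j hj => ?_)
      rw [hφ, mul_pow, ← pow_mul (A j), ← pow_mul t, ← pow_succ q, ← pow_succ q]
    rw [hfro, hxdef]
    simp only
    rw [Finset.sum_range_succ]
    have : ∀ j ∈ Finset.range (i + 1),
        A j ^ q ^ (i + 1 - j) * t ^ q ^ (i + 1 - j + 1)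
          = A j ^ q ^ (i - j + 1) * t ^ q ^ (i - j + 2) := by
      intro j hj
      rw [Finset.mem_range] at hj
      have h1 : i + 1 - j = i - j + 1 := by omega
      rw [h1, show i - j + 1 + 1 = i - j + 2 from by omega]
    rw [Finset.sum_congr rfl this]
    simp [mul_comm]
  -- the fixed vector
  set w : V := ∑ i ∈ Finset.range (n + 1), x i • g i with hwdef
  refine ⟨w, ?_, ?_⟩
  · intro hw0
    have hfin : (∑ i : Fin (n + 1), x i.val • g i.val) = 0 := by
      rw [Fin.sum_univ_eq_sum_range (fun i => x i • g i) (n + 1)]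
      exact hw0
    have := (Fintype.linearIndependent_iff.mp hindep) (fun i => x i.val) hfin (Fin.last n)
    simp only [Fin.val_last] at this
    rw [hxn] at this
    exact ht0 this
  · -- F w = w
    have hFg : ∀ i, F (g i) = g (i + 1) := by
      intro i
      rw [hgdef]
      simp only
      rw [Function.iterate_succ_apply']
    have hgsum : g (n + 1) = ∑ j ∈ Finset.range (n + 1), A j • g j := by
      rw [← hsum, ← Fin.sum_univ_eq_sum_range (fun j => A j • g j) (n + 1)]
      exact Finset.sum_congr rfl (fun j _ => by rw [hA j]) |>.symm
    have hFw : F w = ∑ i ∈ Finset.range (n + 1), x i ^ q • g (i + 1) := by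
      rw [hwdef, map_sum]
      refine Finset.sum_congr rfl (fun i _ => ?_)
      rw [hF, hFg]
    rw [hFw]
    rw [Finset.sum_range_succ, hxn, hgsum, Finset.smul_sum]
    have hlast : ∀ j ∈ Finset.range (n + 1), t ^ q • A j • g j = (t ^ q * A j) • g j := by
      intro j _; rw [smul_smul]
    rw [Finset.sum_congr rfl hlast]
    rw [Finset.sum_range_succ' (fun j => (t ^ q * A j) • g j) n]
    conv_rhs => rw [hwdef, Finset.sum_range_succ' (fun i => x i • g i) n]
    have hcomb : ∀ i ∈ Finset.range n, x (i + 1) • g (i + 1)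
        = x i ^ q • g (i + 1) + (t ^ q * A (i + 1)) • g (i + 1) := by
      intro i _
      rw [hrec i, add_smul]
    rw [Finset.sum_congr rfl hcomb, Finset.sum_add_distrib, hx0]
    abel

end Fixed

universe u

lemma aux_main {k : Type*} [Field k] [IsAlgClosed k] (p : ℕ) [Fact p.Prime] [CharP k p]
    (e : ℕ) (he : 1 ≤ e) (n : ℕ) :
    ∀ (V : Type u) [AddCommGroup V] [Module k V] [FiniteDimensional k V],
      Module.finrank k V = n →
      ∀ (F : V →+ V), (∀ (c : k) (v : V), F (c • v) = c ^ (p ^ e) • F v) →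
      Function.Injective F →
      ∃ b : Basis (Fin n) k V, ∀ i, F (b i) = b i := by
  induction n with
  | zero =>
    intro V _ _ _ hrank F hF hinj
    haveI : Subsingleton V := Module.finrank_zero_iff.mp hrank
    exact ⟨Basis.empty V, fun i => i.elim0⟩
  | succ n ih =>
    intro V _ _ _ hrank F hF hinj
    set q : ℕ := p ^ e with hqdef
    have hp2 : 2 ≤ p := (Fact.out : p.Prime).two_le
    have hq : 2 ≤ q := le_trans hp2 (Nat.le_self_pow (by omega) p)
    -- a nonzero fixed vector
    have hV : ∃ v : V, v ≠ 0 := by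
      haveI : Nontrivial V := Module.nontrivial_of_finrank_pos (R := k) (by omega)
      obtain ⟨v, hv⟩ := exists_ne (0 : V)
      exact ⟨v, hv⟩
    obtain ⟨w, hw0, hwfix⟩ := aux_exists_fixed p e he F hF hinj hV
    set W : Submodule k V := k ∙ w with hWdef
    have hwW : w ∈ W := Submodule.mem_span_singleton_self w
    have hrankq : Module.finrank k (V ⧸ W) = n := by
      have h1 := Submodule.finrank_quotient_add_finrank W
      rw [finrank_span_singleton hw0] at h1
      omega
    -- the induced map on the quotient
    have hstab : ∀ u₁ u₂ : V, u₁ - u₂ ∈ W → F u₁ - F u₂ ∈ W := by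
      intro u₁ u₂ h
      obtain ⟨c, hc⟩ := Submodule.mem_span_singleton.mp h
      rw [← map_sub, ← hc, hF, hwfix]
      exact Submodule.mem_span_singleton.mpr ⟨c ^ q, rfl⟩
    let Fbar : (V ⧸ W) →+ (V ⧸ W) :=
      { toFun := fun y => Quotient.liftOn' y (fun u => Submodule.Quotient.mk (F u))
          (fun u₁ u₂ h => by
            refine (Submodule.Quotient.eq W).mpr ?_
            exact hstab u₁ u₂ ((Submodule.quotientRel_def W).mp h))
        map_zero' := by
          show Submodule.Quotient.mk (F 0) = 0
          rw [map_zero]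
          rfl
        map_add' := by
          intro y₁ y₂
          refine Quotient.inductionOn₂' y₁ y₂ (fun u₁ u₂ => ?_)
          show Submodule.Quotient.mk (F (u₁ + u₂))
            = Submodule.Quotient.mk (F u₁) + Submodule.Quotient.mk (F u₂)
          rw [map_add, Submodule.Quotient.mk_add] }
    have hFbarmk : ∀ u : V, Fbar (Submodule.Quotient.mk u) = Submodule.Quotient.mk (F u) :=
      fun u => rfl
    have hFbarsl : ∀ (c : k) (y : V ⧸ W), Fbar (c • y) = c ^ q • Fbar y := by
      intro c y
      refine Quotient.inductionOn' y (fun u => ?_)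
      have h1 : (Quotient.mk'' u : V ⧸ W) = Submodule.Quotient.mk u := rfl
      rw [h1, ← Submodule.Quotient.mk_smul, hFbarmk, hFbarmk, hF, Submodule.Quotient.mk_smul]
    have hFbarinj : Function.Injective Fbar := by
      refine (injective_iff_map_eq_zero Fbar).mpr ?_
      intro y hy
      revert hy
      refine Quotient.inductionOn' y (fun u hu => ?_)
      have h1 : (Quotient.mk'' u : V ⧸ W) = Submodule.Quotient.mk u := rfl
      rw [h1, hFbarmk, Submodule.Quotient.mk_eq_zero] at hu
      obtain ⟨c, hc⟩ := Submodule.mem_span_singleton.mp hu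
      obtain ⟨d, hd⟩ := aux_pow_root q (by omega) c
      have h2 : F u = F (d • w) := by
        rw [hF, hwfix, hd, hc]
      rw [h1, Submodule.Quotient.mk_eq_zero]
      rw [hinj h2]
      exact Submodule.smul_mem _ d hwW
    obtain ⟨bq, hbq⟩ := ih (V ⧸ W) hrankq Fbar hFbarsl hFbarinj
    -- lift the basis
    have hlift : ∀ i : Fin n, ∃ u : V, Submodule.Quotient.mk u = bq i ∧ F u = u := by
      intro i
      obtain ⟨u, hu⟩ := Submodule.Quotient.mk_surjective W (bq i)
      have h1 : F u - u ∈ W := by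
        rw [← Submodule.Quotient.eq W]
        rw [show (Submodule.Quotient.mk (F u) : V ⧸ W) = Fbar (Submodule.Quotient.mk u) from rfl,
          hu, hbq i]
      obtain ⟨c, hc⟩ := Submodule.mem_span_singleton.mp h1
      obtain ⟨s, hs⟩ := aux_AS q hq c
      refine ⟨u + s • w, ?_, ?_⟩
      · rw [Submodule.Quotient.mk_add, hu,
          (Submodule.Quotient.mk_eq_zero W).mpr (Submodule.smul_mem _ s hwW), add_zero]
      · rw [map_add, hF, hwfix]
        have h2 : F u = u + c • w := by
          rw [hc]
          abel
        have h3 : (s ^ q + c) • w = s • w := by rw [hs]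
        rw [h2, ← h3, add_smul]
        abel
    choose vv hvmk hvfix using hlift
    -- assemble the basis
    have hli : LinearIndependent k (Fin.cons w vv : Fin (n + 1) → V) := by
      refine linearIndependent_fin_cons.mpr ⟨?_, ?_⟩
      · have hcomp : (W.mkQ : V →ₗ[k] V ⧸ W) ∘ vv = ⇑bq := by
          funext i
          simp only [Function.comp_apply, Submodule.mkQ_apply]
          exact hvmk i
        refine LinearIndependent.of_comp W.mkQ ?_
        rw [hcomp]
        exact bq.linearIndependent
      · intro hmem
        obtain ⟨c, hc⟩ := (Submodule.mem_span_range_iff_exists_fun k).mp hmem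
        have h0 : (∑ i, c i • bq i) = 0 := by
          have := congrArg (W.mkQ) hc
          simp only [map_sum, map_smul, Submodule.mkQ_apply] at this
          rw [Finset.sum_congr rfl (fun i _ => by rw [hvmk i])] at this
          rw [this]
          exact (Submodule.Quotient.mk_eq_zero W).mpr hwW
        have hz := Fintype.linearIndependent_iff.mp bq.linearIndependent c h0
        have : w = 0 := by
          rw [← hc, Finset.sum_eq_zero (fun i _ => by rw [hz i, zero_smul])]
        exact hw0 this
    have hcard : Fintype.card (Fin (n + 1)) = Module.finrank k V := by
      simp [hrank]
    refine ⟨basisOfLinearIndependentOfCardEqFinrank hli (by simp [hrank]), ?_⟩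
    intro i
    rw [coe_basisOfLinearIndependentOfCardEqFinrank]
    refine Fin.cases ?_ ?_ i
    · simpa using hwfix
    · intro j
      simpa using hvfix j


/-- If `k` is an algebraically closed field of characteristic `p > 0`, `q = p ^ e`, and `V`
a finite-dimensional `k`-vector space with an injective `q`-semilinear map `F : V → V`,
then `V` has a basis of `F`-fixed vectors. -/
theorem stmt1 (k : Type*) [Field k] [IsAlgClosed k] (p : ℕ) [Fact p.Prime] [CharP k p]
    (e : ℕ) (he : 1 ≤ e)
    (V : Type*) [AddCommGroup V] [Module k V] [FiniteDimensional k V]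
    (F : V →+ V) (hF : ∀ (c : k) (v : V), F (c • v) = c ^ (p ^ e) • F v)
    (hinj : Function.Injective F) :
    ∃ b : Basis (Fin (Module.finrank k V)) k V, ∀ i, F (b i) = b i := by
  exact aux_main p e he (Module.finrank k V) V rfl F hF hinj
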